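/- Let (X, ℬ) be a measurable space, κ a sub-Markov transition kernel on X, m a conservative reversible probability measure for κ, and f : X → ℝ a bounded measurable function. If ∫_X (f(x) − (T f)(x))·f(x) m(dx) = 0, then f(x₀) = f(x₁) for σ_m-almost every pair (x₀, x₁) ∈ X × X. -/

import Mathlib

open MeasureTheory ProbabilityTheory

variable {X : Type*} [MeasurableSpace X]

/-- A function is bounded measurable. -/
def BddMeasurable {X : Type*} [MeasurableSpace X] (f : X → ℝ) : Prop :=
  Measurable f ∧ ∃ C : ℝ, ∀ x, |f x| ≤ C

/-- The transition operator `T f (x) = ∫ f(y) κ(x, dy)`. -/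
noncomputable def Tker {X : Type*} [MeasurableSpace X] (κ : Kernel X X) (f : X → ℝ) :
    X → ℝ :=
  fun x => ∫ y, f y ∂(κ x)

/-- `m` is an invariant measure: `∫ T f dm = ∫ f dm` for all bounded measurable `f`. -/
def IsInvariantMeas {X : Type*} [MeasurableSpace X] (κ : Kernel X X) (m : Measure X) : Prop :=
  ∀ f : X → ℝ, BddMeasurable f → ∫ x, Tker κ f x ∂m = ∫ x, f x ∂m

/-- `m` is a reversible measure: `∫ (T f) g dm = ∫ f (T g) dm`
for all bounded measurable `f, g`. -/
def IsReversibleMeas {X : Type*} [MeasurableSpace X] (κ : Kernel X X) (m : Measure X) : Prop :=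
  ∀ f g : X → ℝ, BddMeasurable f → BddMeasurable g →
    ∫ x, Tker κ f x * g x ∂m = ∫ x, f x * Tker κ g x ∂m

/-- `m` is a conservative measure: `∫ (T 1) g dm = ∫ g dm`
for all bounded measurable `g`, where `T 1 (x) = κ(x, X)`. -/
def IsConservativeMeas {X : Type*} [MeasurableSpace X] (κ : Kernel X X) (m : Measure X) :
    Prop :=
  ∀ g : X → ℝ, BddMeasurable g → ∫ x, (κ x Set.univ).toReal * g x ∂m = ∫ x, g x ∂m

/-- `m` is an extreme element of a set `C` of measures: `m ∈ C` and whenever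
`m = (1 - t) • m₀ + t • m₁` with `t ∈ (0,1)` and `m₀, m₁ ∈ C`, one has `m₀ = m₁`. -/
def IsExtremeElem {X : Type*} [MeasurableSpace X] (C : Set (Measure X)) (m : Measure X) :
    Prop :=
  m ∈ C ∧ ∀ t : ℝ, t ∈ Set.Ioo (0 : ℝ) 1 → ∀ m₀ m₁ : Measure X, m₀ ∈ C → m₁ ∈ C →
    m = ENNReal.ofReal (1 - t) • m₀ + ENNReal.ofReal t • m₁ → m₀ = m₁


/-!
Expanding the square, `∫ (f x₀ - f x₁)² dσ_m = ∫ (T 1) f² dm - 2 ∫ f (T f) dm + ∫ T (f²) dm`.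
Conservativity turns the first term into `∫ f² dm`; reversibility tested against the constant `1`,
followed by conservativity, shows that `m` is invariant, which does the same to the last term.
So the nonnegative function `(f x₀ - f x₁)²` has `σ_m`-integral `2 ∫ (f - T f) f dm = 0`.
-/

namespace BddMeasurable

variable {α : Type*} [MeasurableSpace α] {f g : α → ℝ}

lemma integrable (hf : BddMeasurable f) (μ : Measure α) [IsFiniteMeasure μ] :
    Integrable f μ :=
  (integrable_const hf.2.choose).mono' hf.1.aestronglyMeasurable
    (ae_of_all μ fun x => hf.2.choose_spec x)

lemma const (c : ℝ) : BddMeasurable fun _ : α => c :=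
  ⟨measurable_const, |c|, fun _ => le_rfl⟩

lemma comp_measurable {β : Type*} [MeasurableSpace β] (hf : BddMeasurable f) {φ : β → α}
    (hφ : Measurable φ) : BddMeasurable fun x => f (φ x) :=
  ⟨hf.1.comp hφ, hf.2.choose, fun x => hf.2.choose_spec (φ x)⟩

lemma sub (hf : BddMeasurable f) (hg : BddMeasurable g) : BddMeasurable fun x => f x - g x := by
  obtain ⟨hfm, C, hC⟩ := hf
  obtain ⟨hgm, D, hD⟩ := hg
  exact ⟨hfm.sub hgm, C + D, fun x => (abs_sub _ _).trans (add_le_add (hC x) (hD x))⟩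

lemma mul (hf : BddMeasurable f) (hg : BddMeasurable g) : BddMeasurable fun x => f x * g x := by
  obtain ⟨hfm, C, hC⟩ := hf
  obtain ⟨hgm, D, hD⟩ := hg
  refine ⟨hfm.mul hgm, C * D, fun x => ?_⟩
  rw [abs_mul]
  exact mul_le_mul (hC x) (hD x) (abs_nonneg _) ((abs_nonneg _).trans (hC x))

lemma sq (hf : BddMeasurable f) : BddMeasurable fun x => f x ^ 2 := by
  simpa only [pow_two] using hf.mul hf

end BddMeasurable

lemma tker_one (κ : Kernel X X) : Tker κ (fun _ => 1) = fun x => (κ x Set.univ).toReal := by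
  ext x
  simp [Tker, measureReal_def]

lemma IsReversibleMeas.isInvariantMeas {κ : Kernel X X} {m : Measure X}
    (hrev : IsReversibleMeas κ m) (hcon : IsConservativeMeas κ m) : IsInvariantMeas κ m := by
  intro g hg
  have hg1 := hrev g (fun _ => 1) hg (BddMeasurable.const 1)
  simp only [mul_one, tker_one] at hg1
  rw [hg1, ← hcon g hg]
  simp only [mul_comm]

section Kernel

variable (κ : Kernel X X) [IsFiniteKernel κ]

lemma BddMeasurable.tker {f : X → ℝ} (hf : BddMeasurable f) : BddMeasurable (Tker κ f) := by
  obtain ⟨hfm, C, hC⟩ := hf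
  refine ⟨hfm.stronglyMeasurable.integral_kernel.measurable, C * κ.bound.toReal, fun x => ?_⟩
  have hC0 : 0 ≤ C := (abs_nonneg _).trans (hC x)
  calc |Tker κ f x| ≤ C * (κ x).real Set.univ :=
        (norm_integral_le_of_norm_le_const (ae_of_all _ hC) : ‖∫ y, f y ∂κ x‖ ≤ _)
    _ ≤ C * κ.bound.toReal :=
        mul_le_mul_of_nonneg_left
          (ENNReal.toReal_mono κ.bound_ne_top (κ.measure_le_bound x Set.univ)) hC0

lemma integral_sub_sq_kernel {f : X → ℝ} (hf : BddMeasurable f) (x : X) :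
    ∫ y, (f x - f y) ^ 2 ∂κ x =
      (κ x Set.univ).toReal * f x ^ 2 - 2 * (f x * Tker κ f x) + Tker κ (fun y => f y ^ 2) x := by
  have hlin : Integrable (fun y => f x ^ 2 - 2 * f x * f y) (κ x) :=
    (integrable_const _).sub ((hf.integrable _).const_mul _)
  have expand : (fun y => (f x - f y) ^ 2) = fun y => f x ^ 2 - 2 * f x * f y + f y ^ 2 := by
    ext y
    ring
  rw [expand, integral_add hlin (hf.sq.integrable _),
    integral_sub (integrable_const _) ((hf.integrable _).const_mul _), integral_const,
    integral_const_mul, smul_eq_mul, measureReal_def]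
  simp only [Tker]
  ring

variable {κ} {m : Measure X} [IsFiniteMeasure m]

lemma integrable_compProd_sub_sq {f : X → ℝ} (hf : BddMeasurable f) :
    Integrable (fun p : X × X => (f p.1 - f p.2) ^ 2) (m.compProd κ) :=
  ((hf.comp_measurable measurable_fst).sub (hf.comp_measurable measurable_snd)).sq.integrable _

lemma integral_compProd_sub_sq {f : X → ℝ} (hf : BddMeasurable f) :
    ∫ p, (f p.1 - f p.2) ^ 2 ∂(m.compProd κ) =
      ∫ x, (κ x Set.univ).toReal * f x ^ 2 ∂m - 2 * ∫ x, f x * Tker κ f x ∂m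
        + ∫ x, Tker κ (fun y => f y ^ 2) x ∂m := by
  have hT1 : Integrable (fun x => (κ x Set.univ).toReal * f x ^ 2) m :=
    (tker_one κ ▸ ((BddMeasurable.const 1).tker κ).mul hf.sq).integrable m
  have hfTf : Integrable (fun x => 2 * (f x * Tker κ f x)) m :=
    ((hf.mul (hf.tker κ)).integrable m).const_mul 2
  have hdiff : Integrable
      (fun x => (κ x Set.univ).toReal * f x ^ 2 - 2 * (f x * Tker κ f x)) m :=
    hT1.sub hfTf
  rw [Measure.integral_compProd (integrable_compProd_sub_sq hf)]
  simp only [integral_sub_sq_kernel κ hf]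
  rw [integral_add hdiff ((hf.sq.tker κ).integrable m), integral_sub hT1 hfTf,
    integral_const_mul]

lemma integral_compProd_sub_sq_eq_two_mul (hcon : IsConservativeMeas κ m)
    (hinv : IsInvariantMeas κ m) {f : X → ℝ} (hf : BddMeasurable f) :
    ∫ p, (f p.1 - f p.2) ^ 2 ∂(m.compProd κ) = 2 * ∫ x, (f x - Tker κ f x) * f x ∂m := by
  have hsplit : ∫ x, (f x - Tker κ f x) * f x ∂m = ∫ x, f x ^ 2 ∂m - ∫ x, f x * Tker κ f x ∂m := by
    rw [← integral_sub (hf.sq.integrable m) ((hf.mul (hf.tker κ)).integrable m)]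
    congr 1 with x
    ring
  rw [integral_compProd_sub_sq hf, hcon _ hf.sq, hinv _ hf.sq, hsplit]
  ring

end Kernel

theorem lemma8_c_implies_d_general
    (κ : Kernel X X) [IsFiniteKernel κ]
    (m : Measure X) [IsProbabilityMeasure m]
    (hcon : IsConservativeMeas κ m) (hrev : IsReversibleMeas κ m)
    (f : X → ℝ) (hf : BddMeasurable f)
    (hc : ∫ x, (f x - Tker κ f x) * f x ∂m = 0) :
    ∀ᵐ p : X × X ∂(m.compProd κ), f p.1 = f p.2 := by
  have hzero : ∫ p, (f p.1 - f p.2) ^ 2 ∂(m.compProd κ) = 0 := by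
    rw [integral_compProd_sub_sq_eq_two_mul hcon (hrev.isInvariantMeas hcon) hf, hc, mul_zero]
  have hsq := (integral_eq_zero_iff_of_nonneg (fun p => sq_nonneg _)
    (integrable_compProd_sub_sq hf)).mp hzero
  filter_upwards [hsq] with p hp
  exact sub_eq_zero.mp (pow_eq_zero_iff two_ne_zero |>.mp hp)

/-- Lemma 8, (c) implies (d): if `∫ (f - T f) f dm = 0`, then `f(x₀) = f(x₁)` for
σ_m-almost every pair `(x₀, x₁)`. -/
theorem lemma8_c_implies_d
    (κ : Kernel X X) [IsFiniteKernel κ] (hκ : ∀ x, κ x Set.univ ≤ 1)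
    (m : Measure X) [IsProbabilityMeasure m]
    (hcon : IsConservativeMeas κ m) (hrev : IsReversibleMeas κ m)
    (f : X → ℝ) (hf : BddMeasurable f)
    (hc : ∫ x, (f x - Tker κ f x) * f x ∂m = 0) :
    ∀ᵐ p : X × X ∂(m.compProd κ), f p.1 = f p.2 :=
  lemma8_c_implies_d_general κ m hcon hrev f hf hc
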